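/- For every integer k ≥ 0, every proper 4-coloring f of Q_k with f(b_0) = f(d_0) is odd, i.e. J_a(f) is odd for every color a ∈ Fin 4. -/

import Mathlib

/-!
Normalize the colors so that layer `0` reads `(0, 1, 2, 1)`. A finite check shows that every
layer is then one of eight colorings, in which the colors `0` and `2` sit on one pair of opposite
vertices and a single color `1` or `3` on the other pair. Every Kempe chain descends layer by layer
to layer `0`, where `a₀` and `c₀` are adjacent to all other vertices; so each pair of colors
containing `0` or `2` spans a single Kempe chain. The vertices colored `1` or `3` form two strands,
one through `b₀` and one through `d₀`, winding up the layers without ever meeting, so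
`p(1, 3) = 2`. Thus five of the six numbers `p(x, y)` are `1` and one is `2`, and
`J_a(f) ≡ ∑ p(x, y) = 7 (mod 2)`.
-/

/-- A proper 4-coloring of a simple graph `G`. -/
def IsProperColoring {V : Type*} (G : SimpleGraph V) (f : V → Fin 4) : Prop :=
  ∀ ⦃u v : V⦄, G.Adj u v → f u ≠ f v

/-- `kempeCount G f a b` is the number of `ab`-Kempe chains of `f`, i.e. the number of
connected components of the subgraph of `G` induced on `f⁻¹({a, b})`. -/
noncomputable def kempeCount {V : Type*} (G : SimpleGraph V) (f : V → Fin 4)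
    (a b : Fin 4) : ℕ :=
  Nat.card ((G.induce {v | f v = a ∨ f v = b}).ConnectedComponent)

/-- Tutte's quantity `J_a(f) = p(a,b) + p(a,c) + p(a,d) - p(b,c) - p(b,d) - p(c,d)`,
where `{b, c, d} = Fin 4 \ {a}`. -/
noncomputable def Jcol {V : Type*} (G : SimpleGraph V) (f : V → Fin 4) (a : Fin 4) : ℤ :=
  (∑ x ∈ Finset.univ.erase a, (kempeCount G f a x : ℤ)) -
    ∑ x ∈ Finset.univ.erase a,
      ∑ y ∈ (Finset.univ.erase a).filter (fun y => x < y), (kempeCount G f x y : ℤ)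

/-- The coloring-partition of `f`: the set of its nonempty color classes. -/
def colPart {V : Type*} (f : V → Fin 4) : Set (Set V) :=
  {A | A.Nonempty ∧ ∃ c, A = f ⁻¹' {c}}

/-- `P` is a coloring-partition of `G` if it is the coloring-partition of some proper
4-coloring of `G`. -/
def IsColoringPartition {V : Type*} (G : SimpleGraph V) (P : Set (Set V)) : Prop :=
  ∃ f, IsProperColoring G f ∧ P = colPart f

/-- The set of all color classes of proper 4-colorings of `G`. -/
def colorClasses {V : Type*} (G : SimpleGraph V) : Set (Set V) :=
  {A | A.Nonempty ∧ ∃ f c, IsProperColoring G f ∧ A = f ⁻¹' {c}}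

/-- The 4-coloring complex `B(G)`: vertices are color classes of proper 4-colorings of `G`,
two distinct classes being adjacent iff they are color classes of a common proper
4-coloring. -/
def colorComplex {V : Type*} (G : SimpleGraph V) : SimpleGraph (colorClasses G) :=
  SimpleGraph.fromRel (fun A B => ∃ f, IsProperColoring G f ∧
    (∃ c, (A : Set V) = f ⁻¹' {c}) ∧ (∃ c, (B : Set V) = f ⁻¹' {c}))

/-- Two proper 4-colorings are adjacent if they have a common (nonempty) color class. -/
def ColAdj {V : Type*} (G : SimpleGraph V) (f g : V → Fin 4) : Prop :=
  IsProperColoring G f ∧ IsProperColoring G g ∧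
    ∃ c c', (f ⁻¹' {c}).Nonempty ∧ f ⁻¹' {c} = g ⁻¹' {c'}

/-- Generating relation for the triangulation `Q_k`.  The vertex `(i, 0)` is `a_i`,
`(i, 1)` is `b_i`, `(i, 2)` is `c_i` and `(i, 3)` is `d_i`.  Edges: the 4-cycles
`a_i b_i c_i d_i`, connecting edges between consecutive cycles, and the chords
`a_0 c_0` and `a_{k+1} c_{k+1}`. -/
def qkRel (k : ℕ) (u v : Fin (k + 2) × Fin 4) : Prop :=
  (u.1 = v.1 ∧ v.2 = u.2 + 1) ∨
  ((v.1 : ℕ) = (u.1 : ℕ) + 1 ∧ (v.2 = u.2 ∨ v.2 = u.2 + 1)) ∨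
  ((u.1 : ℕ) = 0 ∧ (v.1 : ℕ) = 0 ∧ u.2 = 0 ∧ v.2 = 2) ∨
  ((u.1 : ℕ) = k + 1 ∧ (v.1 : ℕ) = k + 1 ∧ u.2 = 0 ∧ v.2 = 2)

/-- The triangulation `Q_k`. -/
def Qk (k : ℕ) : SimpleGraph (Fin (k + 2) × Fin 4) := SimpleGraph.fromRel (qkRel k)

namespace SimpleGraph

variable {W : Type*} {H : SimpleGraph W}

theorem Reachable.iff_of_forall_adj {P : W → Prop} (hP : ∀ u v, H.Adj u v → (P u ↔ P v))
    {u v : W} (h : H.Reachable u v) : P u ↔ P v := by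
  rw [reachable_iff_reflTransGen] at h
  induction h with
  | refl => rfl
  | tail _ hvw ih => exact ih.trans (hP _ _ hvw)

theorem natCard_connectedComponent_eq_card (R : Finset W)
    (hcover : ∀ w, ∃ r ∈ R, H.Reachable w r)
    (hsep : ∀ r ∈ R, ∀ r' ∈ R, H.Reachable r r' → r = r') :
    Nat.card H.ConnectedComponent = R.card := by
  let F : R → H.ConnectedComponent := fun r => H.connectedComponentMk r
  have hF : F.Bijective := by
    refine ⟨fun r r' h => Subtype.ext (hsep r r.2 r' r'.2 (ConnectedComponent.exact h)), ?_⟩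
    refine ConnectedComponent.ind fun w => ?_
    obtain ⟨r, hr, hwr⟩ := hcover w
    exact ⟨⟨r, hr⟩, ConnectedComponent.sound hwr.symm⟩
  rw [← Nat.card_eq_of_bijective F hF, Nat.card_eq_fintype_card, Fintype.card_coe]

end SimpleGraph

section Kempe

abbrev kempeGraph {V : Type*} (G : SimpleGraph V) (f : V → Fin 4) (a b : Fin 4) :
    SimpleGraph {v | f v = a ∨ f v = b} :=
  G.induce {v | f v = a ∨ f v = b}

variable {V : Type*} {G : SimpleGraph V} {f : V → Fin 4}

theorem kempeGraph_reachable_of_adj {a b : Fin 4} {u v : V} (hu : f u = a ∨ f u = b)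
    (hv : f v = a ∨ f v = b) (h : G.Adj u v) : (kempeGraph G f a b).Reachable ⟨u, hu⟩ ⟨v, hv⟩ :=
  SimpleGraph.Adj.reachable h

theorem kempeCount_comm (a b : Fin 4) : kempeCount G f a b = kempeCount G f b a := by
  have h : {v | f v = a ∨ f v = b} = {v | f v = b ∨ f v = a} := Set.ext fun _ => or_comm
  rw [kempeCount, h, kempeCount]

theorem kempeCount_comp_perm (σ : Equiv.Perm (Fin 4)) (a b : Fin 4) :
    kempeCount G (σ ∘ f) (σ a) (σ b) = kempeCount G f a b := by
  have h : {v | (σ ∘ f) v = σ a ∨ (σ ∘ f) v = σ b} = {v | f v = a ∨ f v = b} := by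
    simp only [Function.comp_apply, Equiv.apply_eq_iff_eq]
  rw [kempeCount, h, kempeCount]

theorem IsProperColoring.comp_perm (hf : IsProperColoring G f) (σ : Equiv.Perm (Fin 4)) :
    IsProperColoring G (σ ∘ f) :=
  fun _ _ huv h => hf huv (σ.injective h)

theorem Jcol_odd_of_kempeCount_eq {e e' : Fin 4} (he : e ≠ e')
    (hf : ∀ x y, x ≠ y → kempeCount G f x y = if s(x, y) = s(e, e') then 2 else 1)
    (a : Fin 4) : Odd (Jcol G f a) := by
  have hf' : ∀ x y, x ≠ y → (kempeCount G f x y : ℤ) = if s(x, y) = s(e, e') then 2 else 1 :=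
    fun x y hxy => by rw [hf x y hxy]; split_ifs <;> rfl
  rw [Jcol, Finset.sum_congr rfl fun x hx => hf' a x (Finset.ne_of_mem_erase hx).symm,
    Finset.sum_congr rfl fun x _ => Finset.sum_congr rfl fun y hy =>
      hf' x y (Finset.mem_filter.1 hy).2.ne]
  clear hf hf'
  -- modulo 2, `J_a` is the sum of all six counts, exactly one of which is `2`
  revert a e e'
  decide

end Kempe

theorem exists_perm_eq_zero_one_two : ∀ x y z : Fin 4, x ≠ y → y ≠ z → x ≠ z →
    ∃ σ : Equiv.Perm (Fin 4), σ x = 0 ∧ σ y = 1 ∧ σ z = 2 := by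
  decide

namespace Qk

variable {k : ℕ}

theorem adj_of_qkRel {u v : Fin (k + 2) × Fin 4} (huv : u ≠ v) (h : qkRel k u v) :
    (Qk k).Adj u v :=
  (SimpleGraph.fromRel_adj _ _ _).2 ⟨huv, Or.inl h⟩

theorem qkRel_of_adj {u v : Fin (k + 2) × Fin 4} (h : (Qk k).Adj u v) :
    qkRel k u v ∨ qkRel k v u :=
  ((SimpleGraph.fromRel_adj _ _ _).1 h).2

theorem adj_layer (i : Fin (k + 2)) (t : Fin 4) : (Qk k).Adj (i, t) (i, t + 1) := by
  refine adj_of_qkRel (fun h => ?_) (Or.inl ⟨rfl, rfl⟩)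
  have : t ≠ t + 1 := by fin_cases t <;> decide
  exact this (congrArg Prod.snd h)

theorem adj_succ (i : Fin (k + 1)) (t : Fin 4) : (Qk k).Adj (i.castSucc, t) (i.succ, t) :=
  adj_of_qkRel (fun h => Fin.castSucc_lt_succ.ne (congrArg Prod.fst h))
    (Or.inr (Or.inl ⟨by simp, Or.inl rfl⟩))

theorem adj_succ_add_one (i : Fin (k + 1)) (t : Fin 4) :
    (Qk k).Adj (i.castSucc, t) (i.succ, t + 1) :=
  adj_of_qkRel (fun h => Fin.castSucc_lt_succ.ne (congrArg Prod.fst h))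
    (Or.inr (Or.inl ⟨by simp, Or.inr rfl⟩))

theorem adj_chord_zero : (Qk k).Adj (0, 0) (0, 2) :=
  adj_of_qkRel (by simp) (Or.inr (Or.inr (Or.inl ⟨by simp, by simp, rfl, rfl⟩)))

theorem adj_chord_last : (Qk k).Adj (Fin.last (k + 1), 0) (Fin.last (k + 1), 2) :=
  adj_of_qkRel (by simp) (Or.inr (Or.inr (Or.inr ⟨rfl, rfl, rfl, rfl⟩)))

theorem adj_zero_of_ne {h s : Fin 4} (hh : h = 0 ∨ h = 2) (hs : s ≠ h) :
    (Qk k).Adj (0, h) (0, s) := by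
  rcases hh with rfl | rfl <;> fin_cases s
  · exact absurd rfl hs
  · exact adj_layer 0 0
  · exact adj_chord_zero
  · exact (adj_layer 0 3).symm
  · exact adj_chord_zero.symm
  · exact (adj_layer 0 1).symm
  · exact absurd rfl hs
  · exact adj_layer 0 2

abbrev IsLayerAbove (x y : Fin 4 → Fin 4) : Prop := ∀ t, y t ≠ x t ∧ y (t + 1) ≠ x t

abbrev IsCycleColoring (x : Fin 4 → Fin 4) : Prop := ∀ t, x t ≠ x (t + 1)

/-- The colorings of a layer that occur above the layer `(0, 1, 2, 1)`: one pair of opposite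
vertices gets the colors `0` and `2`, the other pair one common color `1` or `3`. -/
def admissibleLayers : List (Fin 4 → Fin 4) :=
  [![0, 1, 2, 1], ![0, 3, 2, 3], ![1, 0, 1, 2], ![1, 2, 1, 0],
   ![2, 1, 0, 1], ![2, 3, 0, 3], ![3, 0, 3, 2], ![3, 2, 3, 0]]

set_option maxRecDepth 10000 in
theorem mem_admissibleLayers_of_isLayerAbove {x y : Fin 4 → Fin 4} (hx : x ∈ admissibleLayers)
    (hxy : IsLayerAbove x y) (hy : IsCycleColoring y) : y ∈ admissibleLayers := by
  have key : ∀ x ∈ admissibleLayers, ∀ a b c d : Fin 4, IsLayerAbove x ![a, b, c, d] →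
      IsCycleColoring ![a, b, c, d] → ![a, b, c, d] ∈ admissibleLayers := by
    decide
  have hy_eq : y = ![y 0, y 1, y 2, y 3] := by ext t; fin_cases t <;> rfl
  rw [hy_eq] at hxy hy ⊢
  exact key x hx _ _ _ _ hxy hy

abbrev IsNear (t t' : Fin 4) : Prop := t' = t ∨ t' = t + 1 ∨ t = t' + 1

set_option maxRecDepth 10000 in
set_option synthInstance.maxSize 1000 in
theorem exists_path_down : ∀ x ∈ admissibleLayers, ∀ y ∈ admissibleLayers, IsLayerAbove x y →
    ∀ c d : Fin 4, c ≠ d → ∀ t, (y t = c ∨ y t = d) →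
    ∃ t₁ t₂ s : Fin 4, IsNear t t₁ ∧ IsNear t₁ t₂ ∧ (y t₁ = c ∨ y t₁ = d) ∧
      (y t₂ = c ∨ y t₂ = d) ∧ (t₂ = s ∨ t₂ = s + 1) ∧ (x s = c ∨ x s = d) := by
  decide

abbrev IsOddPairAt (x : Fin 4 → Fin 4) (p : Fin 4) : Prop :=
  ∀ t, (x t = 1 ∨ x t = 3) ↔ (t = p ∨ t = p + 2)

set_option maxRecDepth 10000 in
theorem isOddPairAt_of_isLayerAbove : ∀ x ∈ admissibleLayers, ∀ y ∈ admissibleLayers,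
    IsLayerAbove x y → ∀ p, IsOddPairAt x p →
      IsOddPairAt y (if y p = 1 ∨ y p = 3 then p else p + 1) := by
  decide

set_option maxRecDepth 10000 in
theorem eq_add_two_of_mem_admissibleLayers : ∀ x ∈ admissibleLayers, ∀ t,
    (x t = 1 ∨ x t = 3) → x (t + 2) = x t := by
  decide

variable {g : Fin (k + 2) × Fin 4 → Fin 4}

def layer (g : Fin (k + 2) × Fin 4 → Fin 4) (i : Fin (k + 2)) : Fin 4 → Fin 4 :=
  fun t => g (i, t)

theorem isLayerAbove_layer (hg : IsProperColoring (Qk k) g) (i : Fin (k + 1)) :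
    IsLayerAbove (layer g i.castSucc) (layer g i.succ) :=
  fun t => ⟨(hg (adj_succ i t)).symm, (hg (adj_succ_add_one i t)).symm⟩

theorem layer_mem_admissibleLayers (hg : IsProperColoring (Qk k) g)
    (h0 : layer g 0 = ![0, 1, 2, 1]) (i : Fin (k + 2)) : layer g i ∈ admissibleLayers := by
  induction i using Fin.induction with
  | zero => rw [h0]; decide
  | succ i ih =>
    exact mem_admissibleLayers_of_isLayerAbove ih (isLayerAbove_layer hg i)
      fun t => hg (adj_layer _ t)

theorem reachable_of_isNear {c d : Fin 4} {i : Fin (k + 2)} {t t' : Fin 4} (h : IsNear t t')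
    (ht : g (i, t) = c ∨ g (i, t) = d) (ht' : g (i, t') = c ∨ g (i, t') = d) :
    (kempeGraph (Qk k) g c d).Reachable ⟨(i, t), ht⟩ ⟨(i, t'), ht'⟩ := by
  rcases h with rfl | rfl | rfl
  · rfl
  · exact kempeGraph_reachable_of_adj _ _ (adj_layer i t)
  · exact (kempeGraph_reachable_of_adj _ _ (adj_layer i t')).symm

theorem exists_reachable_castSucc (hg : IsProperColoring (Qk k) g)
    (hL : ∀ i, layer g i ∈ admissibleLayers) {c d : Fin 4} (hcd : c ≠ d) (i : Fin (k + 1))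
    {t : Fin 4} (ht : g (i.succ, t) = c ∨ g (i.succ, t) = d) :
    ∃ s, ∃ hs : g (i.castSucc, s) = c ∨ g (i.castSucc, s) = d,
      (kempeGraph (Qk k) g c d).Reachable ⟨(i.succ, t), ht⟩ ⟨(i.castSucc, s), hs⟩ := by
  obtain ⟨t₁, t₂, s, h₁, h₂, ht₁, ht₂, hs, hxs⟩ :=
    exists_path_down _ (hL _) _ (hL _) (isLayerAbove_layer hg i) c d hcd t ht
  refine ⟨s, hxs, (reachable_of_isNear h₁ ht ht₁).trans
    ((reachable_of_isNear h₂ ht₁ ht₂).trans ?_)⟩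
  rcases hs with rfl | rfl
  · exact (kempeGraph_reachable_of_adj (f := g) hxs ht₂ (adj_succ i t₂)).symm
  · exact (kempeGraph_reachable_of_adj (f := g) hxs ht₂ (adj_succ_add_one i s)).symm

theorem exists_reachable_zero (hg : IsProperColoring (Qk k) g)
    (hL : ∀ i, layer g i ∈ admissibleLayers) {c d : Fin 4} (hcd : c ≠ d)
    (v : {v | g v = c ∨ g v = d}) :
    ∃ s, ∃ hs : g (0, s) = c ∨ g (0, s) = d, (kempeGraph (Qk k) g c d).Reachable v ⟨(0, s), hs⟩ := by
  obtain ⟨⟨i, t⟩, hv⟩ := v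
  induction i using Fin.induction generalizing t with
  | zero => exact ⟨t, hv, .rfl⟩
  | succ i ih =>
    obtain ⟨s, hs, hr⟩ := exists_reachable_castSucc hg hL hcd i hv
    obtain ⟨s', hs', hr'⟩ := ih s hs
    exact ⟨s', hs', hr.trans hr'⟩

theorem kempeCount_eq_one (hg : IsProperColoring (Qk k) g) (h0 : layer g 0 = ![0, 1, 2, 1])
    {c d : Fin 4} (hc : c = 0 ∨ c = 2) (hcd : c ≠ d) : kempeCount (Qk k) g c d = 1 := by
  have hhub : g (0, c) = c ∨ g (0, c) = d :=
    Or.inl (by rcases hc with rfl | rfl <;> exact congrFun h0 _)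
  refine (SimpleGraph.natCard_connectedComponent_eq_card {⟨(0, c), hhub⟩} (fun v => ?_)
    (by simp)).trans (Finset.card_singleton _)
  obtain ⟨s, hs, hr⟩ := exists_reachable_zero hg (layer_mem_admissibleLayers hg h0) hcd v
  refine ⟨_, Finset.mem_singleton_self _, hr.trans ?_⟩
  rcases eq_or_ne s c with rfl | hsc
  · rfl
  · exact (kempeGraph_reachable_of_adj _ _ (adj_zero_of_ne hc hsc)).symm

/-- The position in layer `i` of the strand of `{1, 3}`-vertices through `b₀`: from `(i, p)` the
strand goes up to `(i + 1, p)` if that vertex is colored `1` or `3`, and to `(i + 1, p + 1)`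
otherwise. -/
def oddPos (g : Fin (k + 2) × Fin 4 → Fin 4) : Fin (k + 2) → Fin 4 :=
  Fin.induction 1 fun i p => if g (i.succ, p) = 1 ∨ g (i.succ, p) = 3 then p else p + 1

theorem oddPos_zero : oddPos g 0 = 1 := rfl

theorem oddPos_succ (i : Fin (k + 1)) :
    oddPos g i.succ = if g (i.succ, oddPos g i.castSucc) = 1 ∨ g (i.succ, oddPos g i.castSucc) = 3
      then oddPos g i.castSucc else oddPos g i.castSucc + 1 :=
  Fin.induction_succ ..

theorem oddPos_succ_eq_or (i : Fin (k + 1)) :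
    oddPos g i.succ = oddPos g i.castSucc ∨ oddPos g i.succ = oddPos g i.castSucc + 1 := by
  rw [oddPos_succ]
  split_ifs <;> simp

theorem isOddPairAt_oddPos (hg : IsProperColoring (Qk k) g) (h0 : layer g 0 = ![0, 1, 2, 1])
    (i : Fin (k + 2)) : IsOddPairAt (layer g i) (oddPos g i) := by
  have hL := layer_mem_admissibleLayers hg h0
  induction i using Fin.induction with
  | zero => rw [h0, oddPos_zero]; decide
  | succ i ih =>
    rw [oddPos_succ]
    exact isOddPairAt_of_isLayerAbove _ (hL _) _ (hL _) (isLayerAbove_layer hg i) _ ih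

theorem eq_oddPos_iff_of_qkRel (hg : IsProperColoring (Qk k) g) (h0 : layer g 0 = ![0, 1, 2, 1])
    {u v : Fin (k + 2) × Fin 4} (hu : g u = 1 ∨ g u = 3) (hv : g v = 1 ∨ g v = 3)
    (h : qkRel k u v) : u.2 = oddPos g u.1 ↔ v.2 = oddPos g v.1 := by
  obtain ⟨i, t⟩ := u
  obtain ⟨j, s⟩ := v
  have hpu := (isOddPairAt_oddPos hg h0 i t).1 hu
  have hpv := (isOddPairAt_oddPos hg h0 j s).1 hv
  dsimp only [qkRel] at h hpu hpv ⊢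
  rcases h with ⟨rfl, rfl⟩ | ⟨hij, hst⟩ | ⟨hi, -, rfl, -⟩ | ⟨hi, hj, rfl, rfl⟩
  · have key : ∀ p t : Fin 4, t = p ∨ t = p + 2 → t + 1 = p ∨ t + 1 = p + 2 → False := by
      decide
    exact (key _ _ hpu hpv).elim
  · obtain ⟨l, rfl, rfl⟩ : ∃ l : Fin (k + 1), i = l.castSucc ∧ j = l.succ :=
      ⟨⟨i, by omega⟩, rfl, Fin.ext (by simp [hij])⟩
    have key : ∀ p p' t t' : Fin 4, (p' = p ∨ p' = p + 1) → (t' = t ∨ t' = t + 1) →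
        (t = p ∨ t = p + 2) → (t' = p' ∨ t' = p' + 2) → (t = p ↔ t' = p') := by
      decide
    exact key _ _ _ _ (oddPos_succ_eq_or l) hst hpu hpv
  · obtain rfl : i = 0 := Fin.ext hi
    have : g (0, 0) = 0 := congrFun h0 0
    simp [this] at hu
  · obtain rfl : i = Fin.last (k + 1) := Fin.ext hi
    obtain rfl : j = Fin.last (k + 1) := Fin.ext hj
    exact absurd
      (eq_add_two_of_mem_admissibleLayers _ (layer_mem_admissibleLayers hg h0 _) 0 hu).symm
      (hg adj_chord_last)

theorem eq_oddPos_iff_of_adj (hg : IsProperColoring (Qk k) g) (h0 : layer g 0 = ![0, 1, 2, 1])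
    {u v : {v | g v = 1 ∨ g v = 3}} (h : (kempeGraph (Qk k) g 1 3).Adj u v) :
    u.1.2 = oddPos g u.1.1 ↔ v.1.2 = oddPos g v.1.1 :=
  (qkRel_of_adj h).elim (eq_oddPos_iff_of_qkRel hg h0 u.2 v.2)
    fun h' => (eq_oddPos_iff_of_qkRel hg h0 v.2 u.2 h').symm

theorem kempeCount_one_three (hg : IsProperColoring (Qk k) g)
    (h0 : layer g 0 = ![0, 1, 2, 1]) : kempeCount (Qk k) g 1 3 = 2 := by
  have hb : g (0, 1) = 1 ∨ g (0, 1) = 3 := Or.inl (congrFun h0 1)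
  have hd : g (0, 3) = 1 ∨ g (0, 3) = 3 := Or.inl (congrFun h0 3)
  have hside : ∀ u v : {v | g v = 1 ∨ g v = 3}, (kempeGraph (Qk k) g 1 3).Reachable u v →
      (u.1.2 = oddPos g u.1.1 ↔ v.1.2 = oddPos g v.1.1) :=
    fun u v huv => huv.iff_of_forall_adj fun _ _ => eq_oddPos_iff_of_adj hg h0
  have hbd : (⟨(0, 1), hb⟩ : {v | g v = 1 ∨ g v = 3}) ≠ ⟨(0, 3), hd⟩ := by simp
  refine (SimpleGraph.natCard_connectedComponent_eq_card {⟨(0, 1), hb⟩, ⟨(0, 3), hd⟩}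
    (fun v => ?_) ?_).trans (Finset.card_pair hbd)
  · obtain ⟨s, hs, hr⟩ := exists_reachable_zero hg (layer_mem_admissibleLayers hg h0) (by decide) v
    have hs' := (isOddPairAt_oddPos hg h0 0 s).1 hs
    rw [oddPos_zero] at hs'
    rcases hs' with rfl | rfl
    · exact ⟨_, by simp, hr⟩
    · exact ⟨_, by simp, hr⟩
  · simp only [Finset.mem_insert, Finset.mem_singleton]
    rintro r (rfl | rfl) r' (rfl | rfl) hrr'
    · rfl
    · exact absurd (hside _ _ hrr') (by simp [oddPos_zero])
    · exact absurd (hside _ _ hrr') (by simp [oddPos_zero])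
    · rfl

theorem kempeCount_eq_ite (hg : IsProperColoring (Qk k) g) (h0 : layer g 0 = ![0, 1, 2, 1])
    {c d : Fin 4} (hcd : c ≠ d) :
    kempeCount (Qk k) g c d = if s(c, d) = s(1, 3) then 2 else 1 := by
  split_ifs with h
  · rcases Sym2.eq_iff.1 h with ⟨rfl, rfl⟩ | ⟨rfl, rfl⟩
    · exact kempeCount_one_three hg h0
    · rw [kempeCount_comm]; exact kempeCount_one_three hg h0
  · have key : ∀ c d : Fin 4, c ≠ d → s(c, d) ≠ s(1, 3) → (c = 0 ∨ c = 2) ∨ (d = 0 ∨ d = 2) := by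
      decide
    rcases key c d hcd h with hc | hd
    · exact kempeCount_eq_one hg h0 hc hcd
    · rw [kempeCount_comm]; exact kempeCount_eq_one hg h0 hd hcd.symm

end Qk

/-- Every proper 4-coloring `f` of `Q_k` with `f(b_0) = f(d_0)` is odd: `J_a(f)` is odd
for every color `a`. -/
theorem typeII_coloring_odd (k : ℕ) (f : Fin (k + 2) × Fin 4 → Fin 4)
    (hf : IsProperColoring (Qk k) f)
    (hbd : f ((0 : Fin (k + 2)), (1 : Fin 4)) = f ((0 : Fin (k + 2)), (3 : Fin 4))) :
    ∀ a : Fin 4, Odd (Jcol (Qk k) f a) := by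
  obtain ⟨σ, h0, h1, h2⟩ := exists_perm_eq_zero_one_two (f (0, 0)) (f (0, 1)) (f (0, 2))
    (hf (Qk.adj_layer 0 0)) (hf (Qk.adj_layer 0 1)) (hf Qk.adj_chord_zero)
  have hg := hf.comp_perm σ
  have hg0 : Qk.layer (σ ∘ f) 0 = ![0, 1, 2, 1] := by
    ext t; fin_cases t <;> simp [Qk.layer, h0, h1, h2, ← hbd]
  refine Jcol_odd_of_kempeCount_eq (e := σ.symm 1) (e' := σ.symm 3) (by simp) fun x y hxy => ?_
  rw [← kempeCount_comp_perm σ, Qk.kempeCount_eq_ite hg hg0 (σ.injective.ne hxy)]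
  congr 1
  simp [Equiv.eq_symm_apply]
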